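/- Let Γ(z) = Σ_n c_n z^n with γ(r) = Σ_n |c_n| r^n < ∞ and γ'(r) = Σ_n n|c_n|r^{n-1} < ∞. Let Δ_N be the self-adjoint average operator of the previous setting with ‖Δ_N‖ ≤ δ ≤ r, and let O be supported on N_O sites. Then ‖[Γ(Δ_N), [Γ(Δ_N), O]]‖ ≤ (4 N_O² / N²) ‖O‖ δ² γ'(δ)². -/

import Mathlib

open scoped Matrix.Norms.L2Operator

/-- `x` acting on the `k`-th tensor factor of `(ℂ^d)^{⊗N}`, realized as a matrix indexed by
configurations `Fin N → Fin d`. -/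
noncomputable def site {d N : ℕ} (x : Matrix (Fin d) (Fin d) ℂ) (k : Fin N) :
    Matrix (Fin N → Fin d) (Fin N → Fin d) ℂ :=
  fun f g => x (f k) (g k) * ∏ j ∈ Finset.univ.erase k, (if f j = g j then (1 : ℂ) else 0)

/-- The collective operator `Δ_N = (1/N) Σ_k Σ_α r_α v_α^(k)`. -/
noncomputable def DeltaN {d N q : ℕ} (r : Fin q → ℝ) (v : Fin q → Matrix (Fin d) (Fin d) ℂ) :
    Matrix (Fin N → Fin d) (Fin N → Fin d) ℂ :=
  (N : ℂ)⁻¹ • ∑ k : Fin N, ∑ α, (r α : ℂ) • site (v α) k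

/-!
A power series `Γ(Δ) = ∑ cₙ Δⁿ` commutes with `Δ`, so the derivations `[Δ, ·]` and `[Γ(Δ), ·]`
commute, and `[Δⁿ, X] = Δ [Δⁿ⁻¹, X] + [Δ, X] Δⁿ⁻¹` gives `‖[Δⁿ, X]‖ ≤ n δⁿ⁻¹ ‖[Δ, X]‖`, hence
`‖[Γ(Δ), X]‖ ≤ γ'(δ) ‖[Δ, X]‖`. Thus `‖[Γ, [Γ, O]]‖ ≤ γ'(δ)² ‖[Δ, [Δ, O]]‖`. Only the sites in the
support `S` of `O` contribute to `[Δ_N, O]`, each with norm at most `2 δ ‖O‖ / N`, and `[Δ_N, O]` is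
again supported on `S`; this gives the factor `(2 |S| δ / N)²`.
-/

section Site

variable {d N : ℕ}

theorem site_apply (x : Matrix (Fin d) (Fin d) ℂ) (k : Fin N) (f g : Fin N → Fin d) :
    site x k f g = if ∀ j ≠ k, f j = g j then x (f k) (g k) else 0 := by
  simp [site, Finset.prod_boole]

theorem sum_ite_forall_ne_eq_sum_update (k : Fin N) (f : Fin N → Fin d) (F : (Fin N → Fin d) → ℂ) :
    ∑ h, (if ∀ j ≠ k, f j = h j then F h else 0) = ∑ y, F (Function.update f k y) := by
  have hfilter : Finset.univ.filter (fun h : Fin N → Fin d ↦ ∀ j ≠ k, f j = h j) =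
      Finset.univ.image (Function.update f k) := by
    ext h
    simp [Function.eq_update_iff, eq_comm]
  rw [← Finset.sum_filter, hfilter, Finset.sum_image (Function.update_injective f k).injOn]

theorem site_mul_apply (a : Matrix (Fin d) (Fin d) ℂ) (k : Fin N)
    (B : Matrix (Fin N → Fin d) (Fin N → Fin d) ℂ) (f g : Fin N → Fin d) :
    (site a k * B) f g = ∑ y, a (f k) y * B (Function.update f k y) g := by
  simp only [Matrix.mul_apply, site_apply, ite_mul, zero_mul]
  rw [sum_ite_forall_ne_eq_sum_update]
  simp

theorem site_mul (a b : Matrix (Fin d) (Fin d) ℂ) (k : Fin N) :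
    site a k * site b k = site (a * b) k := by
  ext f g
  rw [site_mul_apply]
  have hcond (y : Fin d) : (∀ i ≠ k, Function.update f k y i = g i) ↔ ∀ i ≠ k, f i = g i :=
    forall₂_congr fun i hi ↦ by rw [Function.update_of_ne hi]
  simp only [site_apply, Matrix.mul_apply, Function.update_self, hcond]
  split_ifs <;> simp

theorem site_one (k : Fin N) : site (1 : Matrix (Fin d) (Fin d) ℂ) k = 1 := by
  ext f g
  have hcond : ((∀ j ≠ k, f j = g j) ∧ f k = g k) ↔ f = g := by
    refine ⟨fun h ↦ funext fun j ↦ ?_, fun h ↦ by simp [h]⟩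
    by_cases hj : j = k
    · exact hj ▸ h.2
    · exact h.1 j hj
  simp only [site_apply, Matrix.one_apply, ← ite_and, hcond]

theorem site_add (a b : Matrix (Fin d) (Fin d) ℂ) (k : Fin N) :
    site (a + b) k = site a k + site b k := by
  ext f g
  simp only [site_apply, Matrix.add_apply]
  split_ifs <;> simp

theorem site_smul (c : ℂ) (a : Matrix (Fin d) (Fin d) ℂ) (k : Fin N) :
    site (c • a) k = c • site a k := by
  ext f g
  simp [site_apply]

theorem site_star (a : Matrix (Fin d) (Fin d) ℂ) (k : Fin N) :
    site (star a) k = star (site a k) := by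
  ext f g
  simp only [site_apply, Matrix.star_apply, eq_comm (a := f _)]
  split_ifs <;> simp

noncomputable def siteStarAlgHom (k : Fin N) :
    Matrix (Fin d) (Fin d) ℂ →⋆ₐ[ℂ] Matrix (Fin N → Fin d) (Fin N → Fin d) ℂ where
  toFun x := site x k
  map_one' := site_one k
  map_mul' a b := (site_mul a b k).symm
  map_zero' := by simpa using site_smul 0 0 k
  map_add' a b := site_add a b k
  commutes' c := by simp [Algebra.algebraMap_eq_smul_one, site_smul, site_one]
  map_star' a := site_star a k

theorem norm_site_le (x : Matrix (Fin d) (Fin d) ℂ) (k : Fin N) : ‖site x k‖ ≤ ‖x‖ :=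
  NonUnitalStarAlgHom.norm_apply_le (siteStarAlgHom k) x

theorem site_mul_site_apply_of_ne {j k : Fin N} (hjk : j ≠ k) (a b : Matrix (Fin d) (Fin d) ℂ)
    (f g : Fin N → Fin d) :
    (site a j * site b k) f g =
      if ∀ i, i ≠ j → i ≠ k → f i = g i then a (f j) (g j) * b (f k) (g k) else 0 := by
  rw [site_mul_apply]
  have hcond (y : Fin d) : (∀ i ≠ k, Function.update f j y i = g i) ↔
      y = g j ∧ ∀ i, i ≠ j → i ≠ k → f i = g i := by
    constructor
    · intro h
      exact ⟨by simpa using h j hjk, fun i hij hik ↦ by simpa [hij] using h i hik⟩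
    · rintro ⟨rfl, h⟩ i hik
      by_cases hij : i = j
      · simp [hij]
      · simp [hij, h i hij hik]
  simp only [site_apply, Function.update_of_ne hjk.symm, hcond, ite_and, mul_ite, mul_zero,
    Finset.sum_ite_eq', Finset.mem_univ, if_true]

theorem site_commute_of_ne {j k : Fin N} (hjk : j ≠ k) (a b : Matrix (Fin d) (Fin d) ℂ) :
    Commute (site a j) (site b k) := by
  ext f g
  rw [site_mul_site_apply_of_ne hjk, site_mul_site_apply_of_ne hjk.symm]
  simp only [forall_comm (α := _ ≠ j), mul_comm]

end Site

section Commutator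

theorem lie_pow_succ {A : Type*} [Ring A] (a x : A) (n : ℕ) :
    ⁅a ^ (n + 1), x⁆ = a * ⁅a ^ n, x⁆ + ⁅a, x⁆ * a ^ n := by
  simp only [Ring.lie_def, pow_succ', mul_sub, sub_mul, mul_assoc]
  abel

variable {A : Type*} [NormedRing A]

theorem norm_lie_le (a b : A) : ‖⁅a, b⁆‖ ≤ 2 * ‖a‖ * ‖b‖ := by
  rw [Ring.lie_def, two_mul, add_mul]
  exact (norm_sub_le _ _).trans (add_le_add (norm_mul_le _ _)
    ((norm_mul_le _ _).trans_eq (mul_comm _ _)))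

theorem norm_mul_pow_le {a : A} {δ : ℝ} (ha : ‖a‖ ≤ δ) (y : A) (n : ℕ) :
    ‖y * a ^ n‖ ≤ ‖y‖ * δ ^ n := by
  rcases n.eq_zero_or_pos with rfl | hn
  · simp
  · exact (norm_mul_le _ _).trans <| by
      gcongr; exact (norm_pow_le' a hn).trans (pow_le_pow_left₀ (norm_nonneg a) ha n)

theorem norm_lie_pow_le {a : A} {δ : ℝ} (ha : ‖a‖ ≤ δ) (x : A) (n : ℕ) :
    ‖⁅a ^ n, x⁆‖ ≤ n * δ ^ (n - 1) * ‖⁅a, x⁆‖ := by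
  have hδ : 0 ≤ δ := (norm_nonneg a).trans ha
  induction n with
  | zero => simp [Ring.lie_def]
  | succ n ih =>
    calc ‖⁅a ^ (n + 1), x⁆‖ ≤ ‖a‖ * ‖⁅a ^ n, x⁆‖ + ‖⁅a, x⁆‖ * δ ^ n := by
          rw [lie_pow_succ]
          exact (norm_add_le _ _).trans (add_le_add (norm_mul_le _ _) (norm_mul_pow_le ha _ n))
      _ ≤ δ * (n * δ ^ (n - 1) * ‖⁅a, x⁆‖) + ‖⁅a, x⁆‖ * δ ^ n := by gcongr
      _ = (n + 1 : ℕ) * δ ^ (n + 1 - 1) * ‖⁅a, x⁆‖ := by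
          rcases n.eq_zero_or_pos with rfl | hn
          · simp
          · obtain ⟨m, rfl⟩ := Nat.exists_eq_add_of_lt hn
            simp only [zero_add, Nat.add_sub_cancel, pow_succ]
            push_cast
            ring

theorem HasSum.lie_left {ι : Type*} {f : ι → A} {s : A} (hf : HasSum f s) (x : A) :
    HasSum (fun i ↦ ⁅f i, x⁆) ⁅s, x⁆ := by
  simpa only [Ring.lie_def] using (hf.mul_right x).sub (hf.mul_left x)

theorem commute_tsum_smul_pow [NormedAlgebra ℝ A] (c : ℕ → ℝ) (a : A) :
    Commute a (∑' n, c n • a ^ n) :=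
  Commute.tsum_right _ fun n ↦ ((Commute.refl a).pow_right n).smul_right (c n)

theorem norm_lie_tsum_smul_pow_le [NormedAlgebra ℝ A] (c : ℕ → ℝ) {a : A} {δ : ℝ}
    (ha : ‖a‖ ≤ δ) (hc : Summable fun n : ℕ ↦ n * |c n| * δ ^ (n - 1)) (x : A) :
    ‖⁅∑' n, c n • a ^ n, x⁆‖ ≤ (∑' n : ℕ, n * |c n| * δ ^ (n - 1)) * ‖⁅a, x⁆‖ := by
  by_cases hs : Summable fun n ↦ c n • a ^ n
  swap
  -- `tsum` of a non-summable series is `0`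
  · rw [tsum_eq_zero_of_not_summable hs, Ring.lie_def, zero_mul, mul_zero, sub_zero, norm_zero]
    have hδ : 0 ≤ δ := (norm_nonneg a).trans ha
    exact mul_nonneg (tsum_nonneg fun n ↦ by positivity) (norm_nonneg _)
  have hterm (n : ℕ) : ‖⁅c n • a ^ n, x⁆‖ ≤ n * |c n| * δ ^ (n - 1) * ‖⁅a, x⁆‖ := by
    rw [Ring.lie_def, smul_mul_assoc, mul_smul_comm, ← smul_sub, ← Ring.lie_def, norm_smul,
      Real.norm_eq_abs]
    calc |c n| * ‖⁅a ^ n, x⁆‖ ≤ |c n| * (n * δ ^ (n - 1) * ‖⁅a, x⁆‖) := by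
          gcongr; exact norm_lie_pow_le ha x n
      _ = n * |c n| * δ ^ (n - 1) * ‖⁅a, x⁆‖ := by ring
  have hbound : Summable fun n : ℕ ↦ n * |c n| * δ ^ (n - 1) * ‖⁅a, x⁆‖ := hc.mul_right _
  rw [(hs.hasSum.lie_left x).tsum_eq.symm, ← tsum_mul_right]
  exact (norm_tsum_le_tsum_norm (hbound.of_nonneg_of_le (fun _ ↦ norm_nonneg _) hterm)).trans
    (Summable.tsum_le_tsum hterm (hbound.of_nonneg_of_le (fun _ ↦ norm_nonneg _) hterm) hbound)

theorem lie_lie_comm_of_commute {R : Type*} [Ring R] {a b : R} (h : Commute a b) (x : R) :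
    ⁅a, ⁅b, x⁆⁆ = ⁅b, ⁅a, x⁆⁆ := by
  have key : ⁅a, ⁅b, x⁆⁆ - ⁅b, ⁅a, x⁆⁆ = ⁅a * b - b * a, x⁆ := by
    simp only [Ring.lie_def]; noncomm_ring
  rwa [h.eq, sub_self, show ⁅(0 : R), x⁆ = 0 by simp [Ring.lie_def], sub_eq_zero] at key

end Commutator

section Support

variable {d N q : ℕ}

def supportedOn (d : ℕ) (S : Finset (Fin N)) :
    Subalgebra ℂ (Matrix (Fin N → Fin d) (Fin N → Fin d) ℂ) :=
  Subalgebra.centralizer ℂ {y | ∃ k ∉ S, ∃ m, site m k = y}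

theorem mem_supportedOn_iff {S : Finset (Fin N)} {X : Matrix (Fin N → Fin d) (Fin N → Fin d) ℂ} :
    X ∈ supportedOn d S ↔ ∀ k ∉ S, ∀ m, Commute (site m k) X := by
  simp only [supportedOn, Subalgebra.mem_centralizer_iff, Set.mem_ofPred_eq]
  exact ⟨fun h k hk m ↦ h _ ⟨k, hk, m, rfl⟩, fun h _ ⟨k, hk, m, hy⟩ ↦ hy ▸ h k hk m⟩

theorem site_mem_supportedOn {S : Finset (Fin N)} {k : Fin N} (hk : k ∈ S)
    (m : Matrix (Fin d) (Fin d) ℂ) : site m k ∈ supportedOn d S :=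
  mem_supportedOn_iff.2 fun _ hj m' ↦ site_commute_of_ne (ne_of_mem_of_not_mem hk hj).symm m' m

theorem lie_deltaN_eq_sum (ρ : Fin q → ℝ) (v : Fin q → Matrix (Fin d) (Fin d) ℂ)
    {S : Finset (Fin N)} {X : Matrix (Fin N → Fin d) (Fin N → Fin d) ℂ}
    (hX : X ∈ supportedOn d S) :
    ⁅DeltaN (N := N) ρ v, X⁆ = (N : ℂ)⁻¹ • ∑ k ∈ S, ∑ α, (ρ α : ℂ) • ⁅site (v α) k, X⁆ := by
  rw [DeltaN, Finset.sum_subset (Finset.subset_univ S) fun k _ hk ↦ Finset.sum_eq_zero fun α _ ↦ by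
    rw [commute_iff_lie_eq.1 (mem_supportedOn_iff.1 hX k hk _), smul_zero]]
  simp only [Ring.lie_def, smul_mul_assoc, mul_smul_comm, Finset.sum_mul, Finset.mul_sum, ← smul_sub,
    ← Finset.sum_sub_distrib]

theorem lie_mem_supportedOn {S : Finset (Fin N)} {a X : Matrix (Fin N → Fin d) (Fin N → Fin d) ℂ}
    (ha : a ∈ supportedOn d S) (hX : X ∈ supportedOn d S) : ⁅a, X⁆ ∈ supportedOn d S := by
  rw [Ring.lie_def]
  exact sub_mem (mul_mem ha hX) (mul_mem hX ha)

theorem lie_deltaN_mem_supportedOn (ρ : Fin q → ℝ) (v : Fin q → Matrix (Fin d) (Fin d) ℂ)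
    {S : Finset (Fin N)} {X : Matrix (Fin N → Fin d) (Fin N → Fin d) ℂ}
    (hX : X ∈ supportedOn d S) : ⁅DeltaN (N := N) ρ v, X⁆ ∈ supportedOn d S := by
  rw [lie_deltaN_eq_sum ρ v hX]
  exact Subalgebra.smul_mem _ (Subalgebra.sum_mem _ fun k hk ↦ Subalgebra.sum_mem _ fun α _ ↦
    Subalgebra.smul_mem _ (lie_mem_supportedOn (site_mem_supportedOn hk _) hX) _) _

theorem norm_lie_deltaN_le (ρ : Fin q → ℝ) {v : Fin q → Matrix (Fin d) (Fin d) ℂ}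
    (hv : ∀ α, ‖v α‖ ≤ 1) {S : Finset (Fin N)} {X : Matrix (Fin N → Fin d) (Fin N → Fin d) ℂ}
    (hX : X ∈ supportedOn d S) :
    ‖⁅DeltaN (N := N) ρ v, X⁆‖ ≤ 2 * S.card * (∑ α, |ρ α|) / N * ‖X‖ := by
  have hterm (k : Fin N) (α : Fin q) : ‖(ρ α : ℂ) • ⁅site (v α) k, X⁆‖ ≤ |ρ α| * (2 * ‖X‖) := by
    rw [norm_smul, Complex.norm_real, Real.norm_eq_abs]
    gcongr
    calc ‖⁅site (v α) k, X⁆‖ ≤ 2 * ‖site (v α) k‖ * ‖X‖ := norm_lie_le _ _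
      _ ≤ 2 * 1 * ‖X‖ := by gcongr; exact (norm_site_le _ _).trans (hv α)
      _ = 2 * ‖X‖ := by ring
  calc ‖⁅DeltaN (N := N) ρ v, X⁆‖
      ≤ (N : ℝ)⁻¹ * ∑ k ∈ S, ∑ α, |ρ α| * (2 * ‖X‖) := by
        rw [lie_deltaN_eq_sum ρ v hX, norm_smul, norm_inv, Complex.norm_natCast]
        gcongr
        exact (norm_sum_le _ _).trans (Finset.sum_le_sum fun k _ ↦
          (norm_sum_le _ _).trans (Finset.sum_le_sum fun α _ ↦ hterm k α))
    _ = 2 * S.card * (∑ α, |ρ α|) / N * ‖X‖ := by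
        rw [← Finset.sum_mul, Finset.sum_const, nsmul_eq_mul]
        ring

end Support

theorem norm_double_commutator_Gamma_le_general {d N q : ℕ} (c : ℕ → ℝ) (r : ℝ)
    (ρ : Fin q → ℝ) (v : Fin q → Matrix (Fin d) (Fin d) ℂ)
    (hv : ∀ α, ‖v α‖ ≤ 1)
    (hγ' : Summable fun n : ℕ => (n : ℝ) * |c n| * r ^ (n - 1))
    (hδr : (∑ α, |ρ α|) ≤ r)
    (hΔ : ‖DeltaN (N := N) ρ v‖ ≤ ∑ α, |ρ α|)
    (O : Matrix (Fin N → Fin d) (Fin N → Fin d) ℂ) (S : Finset (Fin N))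
    (hsupp : ∀ k ∉ S, ∀ m : Matrix (Fin d) (Fin d) ℂ, Commute (site m k) O) :
    ‖(∑' n : ℕ, c n • (DeltaN (N := N) ρ v) ^ n) *
          ((∑' n : ℕ, c n • (DeltaN (N := N) ρ v) ^ n) * O -
            O * (∑' n : ℕ, c n • (DeltaN (N := N) ρ v) ^ n)) -
        ((∑' n : ℕ, c n • (DeltaN (N := N) ρ v) ^ n) * O -
            O * (∑' n : ℕ, c n • (DeltaN (N := N) ρ v) ^ n)) *
          (∑' n : ℕ, c n • (DeltaN (N := N) ρ v) ^ n)‖ ≤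
      4 * S.card ^ 2 / N ^ 2 * ‖O‖ * (∑ α, |ρ α|) ^ 2 *
        (∑' n : ℕ, (n : ℝ) * |c n| * (∑ α, |ρ α|) ^ (n - 1)) ^ 2 := by
  set Δ := DeltaN (N := N) ρ v
  set δ := ∑ α, |ρ α|
  set G := ∑' n : ℕ, c n • Δ ^ n
  set γ' := ∑' n : ℕ, (n : ℝ) * |c n| * δ ^ (n - 1)
  have hγ'δ : Summable fun n : ℕ ↦ (n : ℝ) * |c n| * δ ^ (n - 1) :=
    hγ'.of_nonneg_of_le (fun n ↦ by positivity) fun n ↦ by gcongr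
  have hγ'_nonneg : 0 ≤ γ' := tsum_nonneg fun n ↦ by positivity
  have hO : O ∈ supportedOn d S := mem_supportedOn_iff.2 hsupp
  have hΔO := norm_lie_deltaN_le ρ hv hO
  have hΔΔO := norm_lie_deltaN_le ρ hv (lie_deltaN_mem_supportedOn ρ v hO)
  simp only [← Ring.lie_def]
  calc ‖⁅G, ⁅G, O⁆⁆‖ ≤ γ' * ‖⁅Δ, ⁅G, O⁆⁆‖ := norm_lie_tsum_smul_pow_le c hΔ hγ'δ _
    _ = γ' * ‖⁅G, ⁅Δ, O⁆⁆‖ := by rw [lie_lie_comm_of_commute (commute_tsum_smul_pow c Δ)]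
    _ ≤ γ' * (γ' * ‖⁅Δ, ⁅Δ, O⁆⁆‖) := by gcongr; exact norm_lie_tsum_smul_pow_le c hΔ hγ'δ _
    _ ≤ γ' * (γ' * (2 * S.card * δ / N * (2 * S.card * δ / N * ‖O‖))) := by
        gcongr
        exact hΔΔO.trans (mul_le_mul_of_nonneg_left hΔO (by positivity))
    _ = 4 * S.card ^ 2 / N ^ 2 * ‖O‖ * δ ^ 2 * γ' ^ 2 := by ring

/-- For `Γ(z) = Σ cₙ zⁿ` with `γ(r) = Σ |cₙ| rⁿ < ∞` and `γ'(r) = Σ n|cₙ|r^(n-1) < ∞`, `Δ_N`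
self-adjoint with `‖Δ_N‖ ≤ δ ≤ r`, and `O` supported on a set `S` of `N_O` sites,
`‖[Γ(Δ_N), [Γ(Δ_N), O]]‖ ≤ (4 N_O²/N²) ‖O‖ δ² γ'(δ)²`. -/
theorem norm_double_commutator_Gamma_le {d N q : ℕ} (c : ℕ → ℝ) (r : ℝ)
    (ρ : Fin q → ℝ) (v : Fin q → Matrix (Fin d) (Fin d) ℂ)
    (hsa : ∀ α, IsSelfAdjoint (v α)) (hv : ∀ α, ‖v α‖ ≤ 1)
    (hγ : Summable fun n : ℕ => |c n| * r ^ n)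
    (hγ' : Summable fun n : ℕ => (n : ℝ) * |c n| * r ^ (n - 1))
    (hδr : (∑ α, |ρ α|) ≤ r)
    (hΔ : ‖DeltaN (N := N) ρ v‖ ≤ ∑ α, |ρ α|)
    (O : Matrix (Fin N → Fin d) (Fin N → Fin d) ℂ) (S : Finset (Fin N))
    (hsupp : ∀ k ∉ S, ∀ m : Matrix (Fin d) (Fin d) ℂ, Commute (site m k) O) :
    ‖(∑' n : ℕ, c n • (DeltaN (N := N) ρ v) ^ n) *
          ((∑' n : ℕ, c n • (DeltaN (N := N) ρ v) ^ n) * O -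
            O * (∑' n : ℕ, c n • (DeltaN (N := N) ρ v) ^ n)) -
        ((∑' n : ℕ, c n • (DeltaN (N := N) ρ v) ^ n) * O -
            O * (∑' n : ℕ, c n • (DeltaN (N := N) ρ v) ^ n)) *
          (∑' n : ℕ, c n • (DeltaN (N := N) ρ v) ^ n)‖ ≤
      4 * S.card ^ 2 / N ^ 2 * ‖O‖ * (∑ α, |ρ α|) ^ 2 *
        (∑' n : ℕ, (n : ℝ) * |c n| * (∑ α, |ρ α|) ^ (n - 1)) ^ 2 :=
  norm_double_commutator_Gamma_le_general c r ρ v hv hγ' hδr hΔ O S hsupp
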